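/- Let (Ω, F, P) be a probability space and let φ, Y, η, ζ be square-integrable real random variables. Define M : ℝ² → ℝ by M(λ₁, λ₂) = E[(φ − φ̃ − λ₁ η)(Y − m − λ₂ ζ)], where φ̃ = E[φ|H] and m = E[Y|H] for a sub-σ-algebra H ⊆ F, and suppose η and ζ are H-measurable. Then M is well-defined (the integrand is integrable for every λ), M is differentiable at λ = 0, and its gradient at 0 is (E[η (Y − m)], −E[(φ − φ̃) ζ]) = (0, 0). -/

import Mathlib

/-!
Expanding the product, `M λ = E[(φ - φ̃)(Y - m)] - λ₁ E[η (Y - m)] - λ₂ E[(φ - φ̃) ζ] + λ₁ λ₂ E[η ζ]`,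
every term being integrable by Cauchy–Schwarz. A residual `f - E[f|H]` is orthogonal to every
`H`-measurable `g ∈ L²`, since `E[g f] = E[E[g f|H]] = E[g E[f|H]]` by the pull-out property.
Hence both linear coefficients vanish and `M` is a constant plus a multiple of `λ₁ λ₂`, which is
flat at the origin.
-/

open MeasureTheory

section ConditionalExpectation

variable {Ω : Type*} {m m₀ : MeasurableSpace Ω} {μ : Measure Ω} {f g : Ω → ℝ}

theorem integral_mul_condExp_of_stronglyMeasurable_left (hm : m ≤ m₀)
    [SigmaFinite (μ.trim hm)] (hg : StronglyMeasurable[m] g) (hf : Integrable f μ)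
    (hgf : Integrable (g * f) μ) :
    ∫ ω, g ω * μ[f|m] ω ∂μ = ∫ ω, g ω * f ω ∂μ :=
  calc ∫ ω, g ω * μ[f|m] ω ∂μ = ∫ ω, μ[g * f|m] ω ∂μ :=
        integral_congr_ae (condExp_mul_of_stronglyMeasurable_left hg hgf hf).symm
    _ = ∫ ω, g ω * f ω ∂μ := integral_condExp hm

theorem integral_mul_sub_condExp_eq_zero [IsFiniteMeasure μ] (hm : m ≤ m₀)
    (hg : StronglyMeasurable[m] g) (hgL : MemLp g 2 μ) (hf : MemLp f 2 μ) :
    ∫ ω, g ω * (f ω - μ[f|m] ω) ∂μ = 0 := by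
  have hgf : Integrable (fun ω => g ω * f ω) μ := hgL.integrable_mul hf
  have hgcf : Integrable (fun ω => g ω * μ[f|m] ω) μ :=
    hgL.integrable_mul (hf.condExp one_le_two)
  simp only [mul_sub]
  rw [integral_sub hgf hgcf,
    integral_mul_condExp_of_stronglyMeasurable_left hm hg (hf.integrable one_le_two) hgf,
    sub_self]

end ConditionalExpectation

section BilinearMoment

variable {Ω : Type*} {m₀ : MeasurableSpace Ω} {μ : Measure Ω} {a b u v : Ω → ℝ}

theorem integrable_sub_const_mul_mul_sub_const_mul (ha : MemLp a 2 μ) (hb : MemLp b 2 μ)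
    (hu : MemLp u 2 μ) (hv : MemLp v 2 μ) (s t : ℝ) :
    Integrable (fun ω => (a ω - s * u ω) * (b ω - t * v ω)) μ :=
  (ha.sub (hu.const_mul s)).integrable_mul (hb.sub (hv.const_mul t))

theorem integral_sub_const_mul_mul_sub_const_mul (ha : MemLp a 2 μ) (hb : MemLp b 2 μ)
    (hu : MemLp u 2 μ) (hv : MemLp v 2 μ) (s t : ℝ) :
    ∫ ω, (a ω - s * u ω) * (b ω - t * v ω) ∂μ =
      ∫ ω, a ω * b ω ∂μ - s * ∫ ω, u ω * b ω ∂μ - t * ∫ ω, a ω * v ω ∂μ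
        + s * t * ∫ ω, u ω * v ω ∂μ := by
  have hab : Integrable (fun ω => a ω * b ω) μ := ha.integrable_mul hb
  have hub : Integrable (fun ω => u ω * b ω) μ := hu.integrable_mul hb
  have hav : Integrable (fun ω => a ω * v ω) μ := ha.integrable_mul hv
  have huv : Integrable (fun ω => u ω * v ω) μ := hu.integrable_mul hv
  calc ∫ ω, (a ω - s * u ω) * (b ω - t * v ω) ∂μ
      = ∫ ω, a ω * b ω - s * (u ω * b ω) - t * (a ω * v ω) + s * t * (u ω * v ω) ∂μ :=
        integral_congr_ae (.of_forall fun ω => by ring)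
    _ = _ := by
      rw [integral_add, integral_sub, integral_sub, integral_const_mul, integral_const_mul,
        integral_const_mul]
      all_goals fun_prop

end BilinearMoment

theorem hasFDerivAt_fst_mul_snd_zero {𝕜 : Type*} [NontriviallyNormedField 𝕜] :
    HasFDerivAt (fun l : 𝕜 × 𝕜 => l.1 * l.2) (0 : 𝕜 × 𝕜 →L[𝕜] 𝕜) (0, 0) :=
  (hasFDerivAt_fst.mul hasFDerivAt_snd).congr_fderiv (by ext <;> simp)

/-- Neyman orthogonality of the orthogonalized moment condition. -/
theorem stmt_5 {Ω : Type*} {F : MeasurableSpace Ω} {μ : Measure Ω} [IsProbabilityMeasure μ]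
    {H : MeasurableSpace Ω} (hHF : H ≤ F)
    {φ Y η ζ : Ω → ℝ} (hφ : MemLp φ 2 μ) (hY : MemLp Y 2 μ)
    (hη : MemLp η 2 μ) (hζ : MemLp ζ 2 μ)
    (hηH : StronglyMeasurable[H] η) (hζH : StronglyMeasurable[H] ζ)
    (M : ℝ × ℝ → ℝ)
    (hM : ∀ l : ℝ × ℝ, M l =
      ∫ ω, (φ ω - (μ[φ|H]) ω - l.1 * η ω) * (Y ω - (μ[Y|H]) ω - l.2 * ζ ω) ∂μ) :
    (∀ l : ℝ × ℝ, Integrable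
        (fun ω => (φ ω - (μ[φ|H]) ω - l.1 * η ω) * (Y ω - (μ[Y|H]) ω - l.2 * ζ ω)) μ) ∧
    HasFDerivAt M (0 : ℝ × ℝ →L[ℝ] ℝ) (0, 0) ∧
    ∫ ω, η ω * (Y ω - (μ[Y|H]) ω) ∂μ = 0 ∧
    ∫ ω, (φ ω - (μ[φ|H]) ω) * ζ ω ∂μ = 0 := by
  have ha : MemLp (fun ω => φ ω - (μ[φ|H]) ω) 2 μ := hφ.sub (hφ.condExp one_le_two)
  have hb : MemLp (fun ω => Y ω - (μ[Y|H]) ω) 2 μ := hY.sub (hY.condExp one_le_two)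
  have hηb : ∫ ω, η ω * (Y ω - (μ[Y|H]) ω) ∂μ = 0 :=
    integral_mul_sub_condExp_eq_zero hHF hηH hη hY
  have haζ : ∫ ω, (φ ω - (μ[φ|H]) ω) * ζ ω ∂μ = 0 := by
    simpa only [mul_comm] using integral_mul_sub_condExp_eq_zero hHF hζH hζ hφ
  have hM_eq : M = fun l : ℝ × ℝ =>
      ∫ ω, (φ ω - (μ[φ|H]) ω) * (Y ω - (μ[Y|H]) ω) ∂μ + (∫ ω, η ω * ζ ω ∂μ) * (l.1 * l.2) := by
    funext l
    rw [hM, integral_sub_const_mul_mul_sub_const_mul ha hb hη hζ, hηb, haζ]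
    ring
  refine ⟨fun l => integrable_sub_const_mul_mul_sub_const_mul ha hb hη hζ l.1 l.2, ?_, hηb, haζ⟩
  rw [hM_eq]
  exact ((hasFDerivAt_fst_mul_snd_zero.const_mul _).const_add _).congr_fderiv (by simp)
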